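/- (Commutator estimate, second form.) For f ∈ H^2(ℝ^d) and g with ∇g, ∇³g ∈ L^∞(ℝ^d), one has Σ_{0<|α|≤3} ‖D^α(fg) − (D^α f) g‖_{L^2} ≤ C(‖∇g‖_{L^∞} + ‖∇³g‖_{L^∞})‖f‖_{H^2}. -/

import Mathlib

set_option maxHeartbeats 1000000

open MeasureTheory ENNReal


-- everywhere bound from a.e. bound for continuous functions on Euclidean space
lemma ae_bound_everywhere {d : ℕ} {F : Type*} [NormedAddCommGroup F]
    {v : EuclideanSpace ℝ (Fin d) → F} (hv : Continuous v) {M : ℝ}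
    (h : ∀ᵐ x ∂(volume : Measure (EuclideanSpace ℝ (Fin d))), ‖v x‖ ≤ M) :
    ∀ x, ‖v x‖ ≤ M := by
  by_contra hc
  push_neg at hc
  obtain ⟨x, hx⟩ := hc
  have hso : IsOpen {y : EuclideanSpace ℝ (Fin d) | M < ‖v y‖} :=
    isOpen_lt continuous_const hv.norm
  have h0 : (volume : Measure (EuclideanSpace ℝ (Fin d))) {y | M < ‖v y‖} = 0 := by
    have := h
    rw [MeasureTheory.ae_iff] at this
    simpa [not_le] using this
  exact absurd h0 (hso.measure_pos volume ⟨x, hx⟩).ne'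

lemma elpnorm_top_bound {d : ℕ} {F : Type*} [NormedAddCommGroup F]
    {v : EuclideanSpace ℝ (Fin d) → F} (hv : Continuous v)
    (hfin : eLpNorm v ∞ (volume : Measure (EuclideanSpace ℝ (Fin d))) < ∞) :
    ∀ x, ‖v x‖ ≤ (eLpNorm v ∞ (volume : Measure (EuclideanSpace ℝ (Fin d)))).toReal := by
  apply ae_bound_everywhere hv
  filter_upwards [ae_le_eLpNormEssSup (f := v) (μ := volume)] with x hx
  have h2 : ((‖v x‖₊ : ℝ≥0∞)).toReal ≤ (eLpNormEssSup v volume).toReal :=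
    ENNReal.toReal_mono (by rw [← eLpNorm_exponent_top]; exact hfin.ne) hx
  simpa [eLpNorm_exponent_top] using h2


lemma landau_step {E F : Type*} [NormedAddCommGroup E] [NormedSpace ℝ E]
    [NormedAddCommGroup F] [NormedSpace ℝ F]
    {G : E → F} (hG : ContDiff ℝ ((⊤ : ℕ∞) : WithTop ℕ∞) G) {a b : ℝ}
    (ha : ∀ x, ‖G x‖ ≤ a) (hb : ∀ x, ‖fderiv ℝ (fderiv ℝ G) x‖ ≤ b) :
    ∀ x, ‖fderiv ℝ G x‖ ≤ 2 * a + b := by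
  have ha0 : 0 ≤ a := le_trans (norm_nonneg _) (ha 0)
  have hb0 : 0 ≤ b := le_trans (norm_nonneg (fderiv ℝ (fderiv ℝ G) 0)) (hb 0)
  have hG1 : ContDiff ℝ ((⊤ : ℕ∞) : WithTop ℕ∞) (fderiv ℝ G) :=
    hG.fderiv_right (by exact_mod_cast le_top)
  have hd1 : Differentiable ℝ G := hG.differentiable (by simp)
  have hd2 : Differentiable ℝ (fderiv ℝ G) := hG1.differentiable (by simp)
  have lip : ∀ y z : E, ‖fderiv ℝ G z - fderiv ℝ G y‖ ≤ b * ‖z - y‖ := by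
    intro y z
    exact Convex.norm_image_sub_le_of_norm_fderiv_le (fun w _ => hd2 w)
      (fun w _ => hb w) convex_univ trivial trivial
  intro x
  have key : ∀ v : E, ‖v‖ = 1 → ‖fderiv ℝ G x v‖ ≤ 2 * a + b := by
    intro v hv
    set H : E → F := fun y => G y - fderiv ℝ G x y with hHdef
    have hH : ∀ y : E, HasFDerivAt H (fderiv ℝ G y - fderiv ℝ G x) y := fun y =>
      ((hd1 y).hasFDerivAt).sub ((fderiv ℝ G x).hasFDerivAt)
    have hmem1 : x ∈ Metric.closedBall x 1 := Metric.mem_closedBall_self zero_le_one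
    have hmem2 : x + v ∈ Metric.closedBall x 1 := by
      simp [Metric.mem_closedBall, dist_eq_norm, hv]
    have h1 : ‖H (x + v) - H x‖ ≤ b * ‖(x + v) - x‖ := by
      apply Convex.norm_image_sub_le_of_norm_fderiv_le
        (fun w _ => (hH w).differentiableAt)
        (fun w hw => ?_) (convex_closedBall x 1) hmem1 hmem2
      rw [(hH w).fderiv]
      calc ‖fderiv ℝ G w - fderiv ℝ G x‖ ≤ b * ‖w - x‖ := lip x w
        _ ≤ b * 1 := by
            apply mul_le_mul_of_nonneg_left _ hb0
            simpa [Metric.mem_closedBall, dist_eq_norm] using hw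
        _ = b := mul_one b
    have h2 : H (x + v) - H x = G (x + v) - G x - fderiv ℝ G x v := by
      simp [hHdef, map_add]
      abel
    rw [h2] at h1
    have hb1 : ‖G (x + v) - G x - fderiv ℝ G x v‖ ≤ b := by
      simpa [add_sub_cancel_left, hv] using h1
    have h3 : ‖fderiv ℝ G x v‖ ≤ ‖G (x + v)‖ + ‖G x‖ + b := by
      have heq : fderiv ℝ G x v = (G (x + v) - G x) - (G (x + v) - G x - fderiv ℝ G x v) := by
        abel
      have htri := norm_sub_le (G (x + v) - G x) (G (x + v) - G x - fderiv ℝ G x v)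
      rw [← heq] at htri
      have htri2 : ‖G (x + v) - G x‖ ≤ ‖G (x + v)‖ + ‖G x‖ := norm_sub_le _ _
      linarith
    calc ‖fderiv ℝ G x v‖ ≤ ‖G (x + v)‖ + ‖G x‖ + b := h3
      _ ≤ a + a + b := by gcongr <;> [exact ha _; exact ha _]
      _ = 2 * a + b := by ring
  apply ContinuousLinearMap.opNorm_le_bound' _ (by linarith)
  intro v hv0
  have hvne : v ≠ 0 := fun h => hv0 (by simp [h])
  have hnv : ‖v‖ ≠ 0 := hv0
  set u : E := ‖v‖⁻¹ • v with hu
  have hun : ‖u‖ = 1 := by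
    rw [hu, norm_smul]
    simp [abs_of_nonneg (inv_nonneg.mpr (norm_nonneg v)), inv_mul_cancel₀ hnv]
  have hvu : v = ‖v‖ • u := by
    rw [hu, smul_smul, mul_inv_cancel₀ hnv, one_smul]
  calc ‖fderiv ℝ G x v‖ = ‖fderiv ℝ G x (‖v‖ • u)‖ := by rw [← hvu]
    _ = ‖v‖ * ‖fderiv ℝ G x u‖ := by rw [ContinuousLinearMap.map_smul, norm_smul, Real.norm_of_nonneg (norm_nonneg v)]
    _ ≤ ‖v‖ * (2 * a + b) := by
        exact mul_le_mul_of_nonneg_left (key u hun) (norm_nonneg v)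
    _ = (2 * a + b) * ‖v‖ := by ring

open MeasureTheory ENNReal

variable {E : Type*} [NormedAddCommGroup E] [NormedSpace ℝ E]

lemma norm_it1 {F : Type*} [NormedAddCommGroup F] [NormedSpace ℝ F]
    {h : E → F} (x : E) : ‖iteratedFDeriv ℝ 1 h x‖ = ‖fderiv ℝ h x‖ := by
  rw [← norm_iteratedFDeriv_fderiv, norm_iteratedFDeriv_zero]

-- derivative of g - c agrees with that of g in positive order
lemma iter_sub_const {g : E → ℝ} (hg : ContDiff ℝ ((⊤ : ℕ∞) : WithTop ℕ∞) g) {n : ℕ}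
    (hn : n ≠ 0) (c : ℝ) (x : E) :
    iteratedFDeriv ℝ n (fun y => g y - c) x = iteratedFDeriv ℝ n g x := by
  have h : (fun y => g y - c) = g + (fun _ => -c) := by funext y; simp [sub_eq_add_neg]
  rw [h, iteratedFDeriv_add_apply (hg.of_le (by exact_mod_cast le_top)).contDiffAt contDiff_const.contDiffAt,
    iteratedFDeriv_const_of_ne hn, Pi.zero_apply, add_zero]

-- pointwise commutator bound
lemma comm_pointwise {f g : E → ℝ} (hf : ContDiff ℝ ((⊤ : ℕ∞) : WithTop ℕ∞) f)
    (hg : ContDiff ℝ ((⊤ : ℕ∞) : WithTop ℕ∞) g) {k : ℕ} (hk1 : 1 ≤ k) (hk3 : k ≤ 3)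
    {m : ℝ} (hm : 0 ≤ m)
    (hgd : ∀ j, 1 ≤ j → j ≤ 3 → ∀ x, ‖iteratedFDeriv ℝ j g x‖ ≤ m) (x : E) :
    ‖iteratedFDeriv ℝ k (fun y => f y * g y) x - g x • iteratedFDeriv ℝ k f x‖ ≤
      3 * m * (‖iteratedFDeriv ℝ 0 f x‖ + ‖iteratedFDeriv ℝ 1 f x‖ + ‖iteratedFDeriv ℝ 2 f x‖) := by
  set c := g x with hc
  set g' : E → ℝ := fun y => g y - c with hg'def
  have hg' : ContDiff ℝ ((⊤ : ℕ∞) : WithTop ℕ∞) g' := hg.sub contDiff_const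
  have hsplit : (fun y => f y * g y) = (fun y => f y * g' y) + (fun y => c • f y) := by
    funext y
    simp [hg'def, smul_eq_mul]
    ring
  have hfk : ContDiff ℝ (k : ℕ) f := hf.of_le (by exact_mod_cast le_top)
  have hg'k : ContDiff ℝ (k : ℕ) g' := hg'.of_le (by exact_mod_cast le_top)
  have heq : iteratedFDeriv ℝ k (fun y => f y * g y) x - g x • iteratedFDeriv ℝ k f x
      = iteratedFDeriv ℝ k (fun y => f y * g' y) x := by
    rw [hsplit, iteratedFDeriv_add_apply (i := k) (hfk.mul hg'k).contDiffAt (hfk.const_smul c).contDiffAt,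
      iteratedFDeriv_const_smul_apply' hfk.contDiffAt]
    rw [← hc]
    abel
  rw [heq]
  have hleib := norm_iteratedFDeriv_mul_le (𝕜 := ℝ) (N := ((⊤ : ℕ∞) : WithTop ℕ∞)) (n := k) hf hg' x
    (by exact_mod_cast le_top)
  have hzero : ‖iteratedFDeriv ℝ 0 g' x‖ = 0 := by
    rw [norm_iteratedFDeriv_zero]
    simp [hg'def, hc]
  have hgd' : ∀ j, 1 ≤ j → j ≤ 3 → ‖iteratedFDeriv ℝ j g' x‖ ≤ m := by
    intro j h1 h3
    rw [hg'def, iter_sub_const hg (by omega) c x]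
    exact hgd j h1 h3 x
  have h0 := abs_nonneg (f x)
  have h1 := norm_nonneg (iteratedFDeriv ℝ 1 f x)
  have h2 := norm_nonneg (iteratedFDeriv ℝ 2 f x)
  interval_cases k <;>
  · simp only [Finset.sum_range_succ, Finset.sum_range_zero, zero_add] at hleib
    norm_num [hzero] at hleib
    simp only [← norm_it1] at hleib
    refine le_trans hleib ?_
    norm_num
    simp only [← norm_it1]
    nlinarith [mul_le_mul_of_nonneg_left (hgd' (1-0) (by norm_num) (by norm_num)) h0,
      mul_le_mul_of_nonneg_left (hgd' (2-0) (by norm_num) (by norm_num)) h0,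
      mul_le_mul_of_nonneg_left (hgd' (3-0) (by norm_num) (by norm_num)) h0,
      mul_le_mul_of_nonneg_left (hgd' (2-1) (by norm_num) (by norm_num)) h1,
      mul_le_mul_of_nonneg_left (hgd' (3-1) (by norm_num) (by norm_num)) h1,
      mul_le_mul_of_nonneg_left (hgd' (3-2) (by norm_num) (by norm_num)) h2,
      mul_nonneg h0 (norm_nonneg (iteratedFDeriv ℝ (1-0) g' x)),
      mul_nonneg h0 (norm_nonneg (iteratedFDeriv ℝ (2-0) g' x)),
      mul_nonneg h0 (norm_nonneg (iteratedFDeriv ℝ (3-0) g' x)),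
      mul_nonneg h1 (norm_nonneg (iteratedFDeriv ℝ (2-1) g' x)),
      mul_nonneg h1 (norm_nonneg (iteratedFDeriv ℝ (3-1) g' x)),
      mul_nonneg h2 (norm_nonneg (iteratedFDeriv ℝ (3-2) g' x)), hm, h0, h1, h2]

lemma hid2_gen {F : Type*} [NormedAddCommGroup F] [NormedSpace ℝ F] {G : E → F} (x : E) :
    ‖iteratedFDeriv ℝ 2 G x‖ = ‖fderiv ℝ (fderiv ℝ G) x‖ := by
  rw [← norm_iteratedFDeriv_fderiv (n := 1) (f := G), norm_it1]

/-- Commutator estimate, second form: for `f ∈ H²(ℝ^d)` and `g` with `∇g, ∇³g ∈ L^∞(ℝ^d)`,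
`Σ_{0<|α|≤3} ‖D^α(fg) − (D^α f) g‖_{L²} ≤ C (‖∇g‖_{L^∞} + ‖∇³g‖_{L^∞}) ‖f‖_{H²}`.
The commutators of all multi-indices with `|α| = k` are packaged as the multilinear map
`∇^k(fg) - g ∇^k f`. -/
theorem commutator_estimate' (d : ℕ) :
    ∃ C : ℝ, 0 < C ∧
      ∀ f g : EuclideanSpace ℝ (Fin d) → ℝ,
        ContDiff ℝ (⊤ : ℕ∞) f → ContDiff ℝ (⊤ : ℕ∞) g →
        (∀ k ≤ 2, MemLp (fun x => iteratedFDeriv ℝ k f x) 2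
          (volume : Measure (EuclideanSpace ℝ (Fin d)))) →
        eLpNorm (fun x => fderiv ℝ g x) ∞ (volume : Measure (EuclideanSpace ℝ (Fin d))) < ∞ →
        eLpNorm (fun x => iteratedFDeriv ℝ 3 g x) ∞
          (volume : Measure (EuclideanSpace ℝ (Fin d))) < ∞ →
        (∑ k ∈ Finset.Icc 1 3,
          eLpNorm (fun x => iteratedFDeriv ℝ k (fun y => f y * g y) x - g x • iteratedFDeriv ℝ k f x)
            2 (volume : Measure (EuclideanSpace ℝ (Fin d)))) ≤
        ENNReal.ofReal C *
          (eLpNorm (fun x => fderiv ℝ g x) ∞ (volume : Measure (EuclideanSpace ℝ (Fin d))) +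
            eLpNorm (fun x => iteratedFDeriv ℝ 3 g x) ∞
              (volume : Measure (EuclideanSpace ℝ (Fin d)))) *
          (∑ k ∈ Finset.range 3, eLpNorm (fun x => iteratedFDeriv ℝ k f x) 2
            (volume : Measure (EuclideanSpace ℝ (Fin d)))) := by
  refine ⟨18, by norm_num, ?_⟩
  intro f g hf hg _hmem hA hB
  set μ : Measure (EuclideanSpace ℝ (Fin d)) := volume with hμ
  have hf' : ContDiff ℝ ((⊤ : ℕ∞) : WithTop ℕ∞) f := hf.of_le (mod_cast le_top)
  have hg' : ContDiff ℝ ((⊤ : ℕ∞) : WithTop ℕ∞) g := hg.of_le (mod_cast le_top)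
  set A := eLpNorm (fun x => fderiv ℝ g x) ∞ μ with hAdef
  set B := eLpNorm (fun x => iteratedFDeriv ℝ 3 g x) ∞ μ with hBdef
  set a := A.toReal with hadef
  set b := B.toReal with hbdef
  have ha0 : 0 ≤ a := ENNReal.toReal_nonneg
  have hb0 : 0 ≤ b := ENNReal.toReal_nonneg
  -- continuity of derivatives
  have hG1 : ContDiff ℝ ((⊤ : ℕ∞) : WithTop ℕ∞) (fderiv ℝ g) :=
    hg'.fderiv_right (by exact_mod_cast le_top)
  have hgc1 : Continuous (fun x => fderiv ℝ g x) := hG1.continuous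
  have hgc3 : Continuous (fun x => iteratedFDeriv ℝ 3 g x) :=
    hg'.continuous_iteratedFDeriv (WithTop.coe_le_coe.mpr (mod_cast le_top))
  -- pointwise bounds on derivatives of g
  have hga : ∀ x, ‖fderiv ℝ g x‖ ≤ a := elpnorm_top_bound hgc1 hA
  have hgb : ∀ x, ‖iteratedFDeriv ℝ 3 g x‖ ≤ b := elpnorm_top_bound hgc3 hB
  have hid3 := fun x => (hid2_gen (G := fderiv ℝ g) x).symm.trans
    (norm_iteratedFDeriv_fderiv (n := 2) (f := g))
  have hid2 : ∀ x, ‖iteratedFDeriv ℝ 2 g x‖ = ‖fderiv ℝ (fderiv ℝ g) x‖ := by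
    intro x
    rw [← norm_iteratedFDeriv_fderiv (n := 1) (f := g), norm_it1]
  have hg2 : ∀ x, ‖iteratedFDeriv ℝ 2 g x‖ ≤ 2 * a + b := by
    intro x
    rw [hid2 x]
    exact landau_step hG1 hga (fun y => (hid3 y).le.trans (hgb y)) x
  set m : ℝ := 2 * (a + b) with hmdef
  have hm0 : 0 ≤ m := by positivity
  have hgd : ∀ j, 1 ≤ j → j ≤ 3 → ∀ x, ‖iteratedFDeriv ℝ j g x‖ ≤ m := by
    intro j hj1 hj3 x
    interval_cases j
    · rw [norm_it1]; nlinarith [hga x]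
    · nlinarith [hg2 x]
    · nlinarith [hgb x]
  -- pointwise commutator bound
  have hpt : ∀ k, 1 ≤ k → k ≤ 3 → ∀ x,
      ‖iteratedFDeriv ℝ k (fun y => f y * g y) x - g x • iteratedFDeriv ℝ k f x‖ ≤
        3 * m * (‖iteratedFDeriv ℝ 0 f x‖ + ‖iteratedFDeriv ℝ 1 f x‖ + ‖iteratedFDeriv ℝ 2 f x‖) :=
    fun k hk1 hk3 x => comm_pointwise hf' hg' hk1 hk3 hm0 hgd x
  set S := ∑ k ∈ Finset.range 3, eLpNorm (fun x => iteratedFDeriv ℝ k f x) 2 μ with hSdef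
  set Φ : EuclideanSpace ℝ (Fin d) → ℝ := fun x =>
    ‖iteratedFDeriv ℝ 0 f x‖ + ‖iteratedFDeriv ℝ 1 f x‖ + ‖iteratedFDeriv ℝ 2 f x‖ with hΦdef
  have hmeas : ∀ i : ℕ, AEStronglyMeasurable (fun x => ‖iteratedFDeriv ℝ i f x‖) μ := fun i =>
    ((hf'.continuous_iteratedFDeriv (by exact_mod_cast ((mod_cast le_top) : ((i:ℕ):ℕ∞) ≤ ⊤))).norm).aestronglyMeasurable
  have hΦle : eLpNorm Φ 2 μ ≤ S := by
    have hsplit : Φ = (fun x => ‖iteratedFDeriv ℝ 0 f x‖ + ‖iteratedFDeriv ℝ 1 f x‖) +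
        (fun x => ‖iteratedFDeriv ℝ 2 f x‖) := rfl
    have hsplit2 : (fun x => ‖iteratedFDeriv ℝ 0 f x‖ + ‖iteratedFDeriv ℝ 1 f x‖) =
        (fun x => ‖iteratedFDeriv ℝ 0 f x‖) + (fun x => ‖iteratedFDeriv ℝ 1 f x‖) := rfl
    calc eLpNorm Φ 2 μ
        ≤ eLpNorm (fun x => ‖iteratedFDeriv ℝ 0 f x‖ + ‖iteratedFDeriv ℝ 1 f x‖) 2 μ +
            eLpNorm (fun x => ‖iteratedFDeriv ℝ 2 f x‖) 2 μ := by
          rw [hsplit]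
          exact eLpNorm_add_le ((hmeas 0).add (hmeas 1)) (hmeas 2) one_le_two
      _ ≤ (eLpNorm (fun x => ‖iteratedFDeriv ℝ 0 f x‖) 2 μ +
            eLpNorm (fun x => ‖iteratedFDeriv ℝ 1 f x‖) 2 μ) +
            eLpNorm (fun x => ‖iteratedFDeriv ℝ 2 f x‖) 2 μ := by
          gcongr
          rw [hsplit2]
          exact eLpNorm_add_le (hmeas 0) (hmeas 1) one_le_two
      _ = eLpNorm (fun x => iteratedFDeriv ℝ 0 f x) 2 μ +
            eLpNorm (fun x => iteratedFDeriv ℝ 1 f x) 2 μ +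
            eLpNorm (fun x => iteratedFDeriv ℝ 2 f x) 2 μ := by
          rw [eLpNorm_norm, eLpNorm_norm, eLpNorm_norm]
      _ = S := by
          rw [hSdef]
          simp [Finset.sum_range_succ]
  have hkey : ∀ k, 1 ≤ k → k ≤ 3 →
      eLpNorm (fun x => iteratedFDeriv ℝ k (fun y => f y * g y) x -
        g x • iteratedFDeriv ℝ k f x) 2 μ ≤ ENNReal.ofReal (3 * m) * S := by
    intro k hk1 hk3
    calc eLpNorm (fun x => iteratedFDeriv ℝ k (fun y => f y * g y) x -
          g x • iteratedFDeriv ℝ k f x) 2 μ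
        ≤ eLpNorm (fun x => (3 * m) * Φ x) 2 μ := by
          apply eLpNorm_mono
          intro x
          refine (hpt k hk1 hk3 x).trans ?_
          rw [Real.norm_eq_abs]
          exact le_abs_self _
      _ = ENNReal.ofReal (3 * m) * eLpNorm Φ 2 μ := by
          have : (fun x => (3 * m) * Φ x) = (3 * m) • Φ := rfl
          rw [this, eLpNorm_const_smul, Real.enorm_eq_ofReal (by positivity)]
      _ ≤ ENNReal.ofReal (3 * m) * S := by gcongr
  have hIcc : (Finset.Icc 1 3 : Finset ℕ) = {1, 2, 3} := by decide
  calc (∑ k ∈ Finset.Icc 1 3,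
        eLpNorm (fun x => iteratedFDeriv ℝ k (fun y => f y * g y) x -
          g x • iteratedFDeriv ℝ k f x) 2 μ)
      = eLpNorm (fun x => iteratedFDeriv ℝ 1 (fun y => f y * g y) x -
          g x • iteratedFDeriv ℝ 1 f x) 2 μ +
        eLpNorm (fun x => iteratedFDeriv ℝ 2 (fun y => f y * g y) x -
          g x • iteratedFDeriv ℝ 2 f x) 2 μ +
        eLpNorm (fun x => iteratedFDeriv ℝ 3 (fun y => f y * g y) x -
          g x • iteratedFDeriv ℝ 3 f x) 2 μ := by
        rw [hIcc]
        rw [Finset.sum_insert (by decide), Finset.sum_insert (by decide),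
          Finset.sum_singleton]
        ring
    _ ≤ ENNReal.ofReal (3 * m) * S + ENNReal.ofReal (3 * m) * S +
          ENNReal.ofReal (3 * m) * S := by
        gcongr
        · exact hkey 1 (by norm_num) (by norm_num)
        · exact hkey 2 (by norm_num) (by norm_num)
        · exact hkey 3 (by norm_num) (by norm_num)
    _ = (ENNReal.ofReal (3 * m) + ENNReal.ofReal (3 * m) + ENNReal.ofReal (3 * m)) * S := by
        ring
    _ = ENNReal.ofReal 18 * (A + B) * S := by
        congr 1
        rw [← ENNReal.ofReal_add (by positivity) (by positivity),
          ← ENNReal.ofReal_add (by positivity) (by positivity)]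
        have : (3 * m) + (3 * m) + (3 * m) = 18 * a + 18 * b := by
          rw [hmdef]; ring
        rw [this, ENNReal.ofReal_add (by positivity) (by positivity),
          show (18 : ℝ) * a = 18 * a from rfl]
        rw [ENNReal.ofReal_mul (by norm_num : (0:ℝ) ≤ 18),
          ENNReal.ofReal_mul (by norm_num : (0:ℝ) ≤ 18)]
        rw [hadef, hbdef, ENNReal.ofReal_toReal hA.ne, ENNReal.ofReal_toReal hB.ne]
        rw [mul_add]
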